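/- There exists a constant C > 0, depending only on the ground state w on ℝ², such that for every τ̃ > 0 and every eigenpair (λ, φ) of the two-dimensional NLEP with Re λ ≥ 0, one has |λ| ≤ C. -/

import Mathlib

open MeasureTheory Filter Metric Real Set

noncomputable section

/-- The Laplacian of a function on `ℝ^N`, as the sum of second partial derivatives. -/
def lapl {N : ℕ} {F : Type*} [NormedAddCommGroup F] [NormedSpace ℝ F]
    (f : EuclideanSpace ℝ (Fin N) → F) (x : EuclideanSpace ℝ (Fin N)) : F :=
  ∑ i, fderiv ℝ (fun y => fderiv ℝ f y (EuclideanSpace.single i 1)) x (EuclideanSpace.single i 1)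

/-- A ground state on `ℝ^N`: a positive, radially symmetric, radially decreasing, smooth
solution of `Δw − w + w³ = 0` tending to `0` at infinity, with `w` and `|∇w|` decaying
exponentially. -/
structure IsGroundState (N : ℕ) (w : EuclideanSpace ℝ (Fin N) → ℝ) : Prop where
  smooth : ContDiff ℝ (⊤ : ℕ∞) w
  pos : ∀ x, 0 < w x
  radial : ∀ x y, ‖x‖ = ‖y‖ → w x = w y
  radialDecreasing : ∀ x y, ‖x‖ ≤ ‖y‖ → w y ≤ w x
  eqn : ∀ x, lapl w x - w x + (w x) ^ 3 = 0
  tendsto_zero : Tendsto w (cocompact _) (nhds 0)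
  expDecay : ∃ C a : ℝ, 0 < C ∧ 0 < a ∧ ∀ x,
      |w x| ≤ C * Real.exp (-a * ‖x‖) ∧ ‖gradient w x‖ ≤ C * Real.exp (-a * ‖x‖)

/-- An eigenpair `(λ, φ)` of the two-dimensional nonlocal eigenvalue problem (NLEP)
with parameter `τ̃`: `φ : ℝ² → ℂ` is `C²`, not identically zero, with `φ` and `|∇φ|`
square-integrable, and satisfies
`Δφ − φ + 3w²φ − (3/(1+τ̃λ))·(∫w²φ/∫w³)·w³ − (2τ̃λ/(1+τ̃λ))·(∫wφ/∫w²)·w³ = λφ`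
pointwise on `ℝ²`. -/
def IsNLEP2Eigenpair (w : EuclideanSpace ℝ (Fin 2) → ℝ) (τ : ℝ) (lam : ℂ)
    (φ : EuclideanSpace ℝ (Fin 2) → ℂ) : Prop :=
  ContDiff ℝ 2 φ ∧ (∃ x, φ x ≠ 0) ∧
  MemLp φ 2 volume ∧ MemLp (fun x => fderiv ℝ φ x) 2 volume ∧
  1 + (τ : ℂ) * lam ≠ 0 ∧
  ∀ x, lapl φ x - φ x + 3 * (w x : ℂ) ^ 2 * φ x
      - (3 / (1 + (τ : ℂ) * lam)) *
          ((∫ y, (w y : ℂ) ^ 2 * φ y) / (∫ y, (w y : ℂ) ^ 3)) * (w x : ℂ) ^ 3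
      - (2 * (τ : ℂ) * lam / (1 + (τ : ℂ) * lam)) *
          ((∫ y, (w y : ℂ) * φ y) / (∫ y, (w y : ℂ) ^ 2)) * (w x : ℂ) ^ 3
      = lam * φ x

lemma MeasureTheory.MemLp.integrable_norm_sq {α E : Type*} [MeasurableSpace α] {μ : Measure α}
    [NormedAddCommGroup E] {f : α → E} (hf : MemLp f 2 μ) :
    Integrable (fun x => ‖f x‖ ^ (2:ℕ)) μ := by
  have := hf.integrable_norm_rpow (by norm_num) (by norm_num)
  refine this.congr ?_
  filter_upwards with x
  rw [ENNReal.toReal_ofNat, show ((2:ℝ)) = ((2:ℕ):ℝ) by norm_num, Real.rpow_natCast]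

lemma integrable_norm_mul_norm {α E F : Type*} [MeasurableSpace α] {μ : Measure α}
    [NormedAddCommGroup E] [NormedAddCommGroup F] {f : α → E} {g : α → F}
    (hf : MemLp f 2 μ) (hg : MemLp g 2 μ) :
    Integrable (fun x => ‖f x‖ * ‖g x‖) μ := by
  have hf2 := hf.integrable_norm_sq
  have hg2 := hg.integrable_norm_sq
  refine Integrable.mono' ((hf2.add hg2).div_const 2) (hf.1.norm.mul hg.1.norm) ?_
  filter_upwards with x
  rw [Real.norm_of_nonneg (by positivity)]
  simp only [Pi.add_apply]
  nlinarith [sq_nonneg (‖f x‖ - ‖g x‖), sq_nonneg (‖f x‖ + ‖g x‖)]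

lemma div_integral_zero (f g : ℝ × ℝ → ℂ)
    (hfd : Differentiable ℝ f) (hgd : Differentiable ℝ g)
    (hf : Integrable f) (hg : Integrable g)
    (hdiv : Integrable (fun p => fderiv ℝ f p (1,0) + fderiv ℝ g p (0,1))) :
    ∫ p, (fderiv ℝ f p (1,0) + fderiv ℝ g p (0,1)) = 0 := by
  -- boundary size function
  set s : ℝ → ENNReal := fun R =>
    (∫⁻ y, ‖f (R, y)‖₊ ∂volume) + (∫⁻ y, ‖f (-R, y)‖₊ ∂volume)
      + (∫⁻ x, ‖g (x, R)‖₊ ∂volume) + (∫⁻ x, ‖g (x, -R)‖₊ ∂volume) with hs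
  have hmf : Measurable fun p : ℝ × ℝ => (‖f p‖₊ : ENNReal) :=
    (hfd.continuous.measurable.nnnorm).coe_nnreal_ennreal
  have hmg : Measurable fun p : ℝ × ℝ => (‖g p‖₊ : ENNReal) :=
    (hgd.continuous.measurable.nnnorm).coe_nnreal_ennreal
  have hf1 : ∫⁻ R, (∫⁻ y, ‖f (R, y)‖₊ ∂volume) ∂volume < ⊤ := by
    have := MeasureTheory.lintegral_prod (μ := volume) (ν := volume) (fun p : ℝ × ℝ => (‖f p‖₊ : ENNReal)) (by rw [← MeasureTheory.Measure.volume_eq_prod]; exact hmf.aemeasurable)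
    rw [← MeasureTheory.Measure.volume_eq_prod] at this
    rw [← this]
    exact hf.2
  have hg1 : ∫⁻ R, (∫⁻ x, ‖g (x, R)‖₊ ∂volume) ∂volume < ⊤ := by
    have := MeasureTheory.lintegral_prod_symm (μ := volume) (ν := volume) (fun p : ℝ × ℝ => (‖g p‖₊ : ENNReal)) (by rw [← MeasureTheory.Measure.volume_eq_prod]; exact hmg.aemeasurable)
    rw [← MeasureTheory.Measure.volume_eq_prod] at this
    rw [← this]
    exact hg.2
  have hneg : MeasurePreserving (fun R : ℝ => -R) volume volume :=
    Measure.measurePreserving_neg volume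
  have hmsf : Measurable fun R : ℝ => ∫⁻ y, ‖f (R, y)‖₊ ∂volume :=
    Measurable.lintegral_prod_right (f := fun R y => (‖f (R, y)‖₊ : ENNReal)) hmf
  have hmsg : Measurable fun R : ℝ => ∫⁻ x, ‖g (x, R)‖₊ ∂volume :=
    Measurable.lintegral_prod_left (f := fun x R => (‖g (x, R)‖₊ : ENNReal)) hmg
  have hf2 : ∫⁻ R, (∫⁻ y, ‖f (-R, y)‖₊ ∂volume) ∂volume < ⊤ := by
    rw [hneg.lintegral_comp hmsf]; exact hf1
  have hg2 : ∫⁻ R, (∫⁻ x, ‖g (x, -R)‖₊ ∂volume) ∂volume < ⊤ := by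
    rw [hneg.lintegral_comp hmsg]; exact hg1
  have hstot : ∫⁻ R, s R ∂volume < ⊤ := by
    rw [hs]
    simp only []
    have m1 : Measurable fun R : ℝ => ∫⁻ y, ‖f (-R, y)‖₊ ∂volume := hmsf.comp measurable_neg
    have m2 : Measurable fun R : ℝ => ∫⁻ x, ‖g (x, -R)‖₊ ∂volume := hmsg.comp measurable_neg
    rw [lintegral_add_left (by exact (hmsf.add m1).add hmsg), lintegral_add_left (by exact hmsf.add m1),
      lintegral_add_left hmsf]
    exact ENNReal.add_lt_top.2 ⟨ENNReal.add_lt_top.2 ⟨ENNReal.add_lt_top.2 ⟨hf1, hf2⟩, hg1⟩, hg2⟩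
  -- existence of good radii
  have key : ∀ M : ℝ, ∀ ε : ℝ, 0 < ε → ∃ R, M < R ∧ s R < ENNReal.ofReal ε := by
    intro M ε hε
    by_contra hcon
    push_neg at hcon
    have hge : ∀ R ∈ Ioi M, ENNReal.ofReal ε ≤ s R := fun R hR => hcon R hR
    have : (∫⁻ R in Ioi M, ENNReal.ofReal ε ∂volume) ≤ ∫⁻ R in Ioi M, s R ∂volume :=
      setLIntegral_mono (by
        have m1 : Measurable fun R : ℝ => ∫⁻ y, ‖f (-R, y)‖₊ ∂volume := hmsf.comp measurable_neg
        have m2 : Measurable fun R : ℝ => ∫⁻ x, ‖g (x, -R)‖₊ ∂volume := hmsg.comp measurable_neg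
        exact ((hmsf.add m1).add hmsg).add m2) hge
    rw [setLIntegral_const] at this
    have hvol : volume (Ioi M) = ⊤ := by simp
    rw [hvol, ENNReal.mul_top ((ENNReal.ofReal_pos.2 hε).ne')] at this
    have : (⊤ : ENNReal) ≤ ∫⁻ R, s R ∂volume :=
      le_trans this (setLIntegral_le_lintegral _ _)
    exact absurd (top_le_iff.1 this ▸ hstot) (lt_irrefl _)
  -- choose an increasing sequence of good radii
  have key' : ∀ M : ℝ, ∀ n : ℕ, ∃ R, M < R ∧ s R < ENNReal.ofReal (1/(n+1)) := by
    intro M n; exact key M (1/(n+1)) (by positivity)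
  choose F hF1 hF2 using key'
  set u : ℕ → ℝ := fun n => Nat.rec (F 0 0) (fun n prev => F (max prev (n+1)) (n+1)) n with hu
  have hu0 : ∀ n, s (u n) < ENNReal.ofReal (1/(n+1)) := by
    intro n; cases n with
    | zero => exact hF2 0 0
    | succ n => exact hF2 _ (n+1)
  have husucc : ∀ n, u (n+1) = F (max (u n) (n+1)) (n+1) := fun n => rfl
  have hmono : StrictMono u := by
    apply strictMono_nat_of_lt_succ
    intro n
    rw [husucc n]
    exact lt_of_le_of_lt (le_max_left _ _) (hF1 _ _)
  have hgt : ∀ n : ℕ, (n:ℝ) < u n := by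
    intro n; cases n with
    | zero => exact_mod_cast (hF1 0 0 : (0:ℝ) < u 0)
    | succ n =>
        rw [husucc n]
        refine lt_of_le_of_lt ?_ (hF1 _ _)
        push_cast
        exact le_max_right _ _
  have hpos : ∀ n, 0 ≤ u n := fun n => le_of_lt (lt_of_le_of_lt (Nat.cast_nonneg n) (hgt n))
  set B : ℕ → Set (ℝ × ℝ) := fun n => Icc (-(u n), -(u n)) ((u n), (u n)) with hB
  -- divergence theorem on each box
  have hdivthm : ∀ n, ∫ p in B n, (fderiv ℝ f p (1,0) + fderiv ℝ g p (0,1)) =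
      (((∫ x in (-(u n))..(u n), g (x, u n)) - ∫ x in (-(u n))..(u n), g (x, -(u n))) +
          ∫ y in (-(u n))..(u n), f (u n, y)) -
        ∫ y in (-(u n))..(u n), f (-(u n), y) := by
    intro n
    exact integral_divergence_prod_Icc_of_hasFDerivAt_off_countable_of_le f g
      (fun p => fderiv ℝ f p) (fun p => fderiv ℝ g p) (-(u n), -(u n)) (u n, u n)
      ⟨by dsimp; linarith [hpos n], by dsimp; linarith [hpos n]⟩ ∅ countable_empty
      hfd.continuous.continuousOn hgd.continuous.continuousOn
      (fun x _ => (hfd x).hasFDerivAt) (fun x _ => (hgd x).hasFDerivAt)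
      hdiv.integrableOn
  -- bounding boundary terms
  have hterm : ∀ (h : ℝ → ℂ) (n : ℕ), (∫⁻ t, ‖h t‖₊ ∂volume) ≤ s (u n) →
      ‖∫ t in (-(u n))..(u n), h t‖ ≤ 1/(n+1) := by
    intro h n hle
    have hfin : (∫⁻ t, ‖h t‖₊ ∂volume) ≠ ⊤ :=
      ne_of_lt (lt_of_le_of_lt hle (lt_of_lt_of_le (hu0 n) le_top))
    rw [intervalIntegral.integral_of_le (by linarith [hpos n])]
    calc ‖∫ t in Ioc (-(u n)) (u n), h t‖
        ≤ (∫⁻ t in Ioc (-(u n)) (u n), ENNReal.ofReal ‖h t‖ ∂volume).toReal :=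
          norm_integral_le_lintegral_norm _
      _ ≤ (∫⁻ t, (‖h t‖₊ : ENNReal) ∂volume).toReal := by
          apply ENNReal.toReal_mono hfin
          simp only [ofReal_norm, enorm_eq_nnnorm]
          exact setLIntegral_le_lintegral _ _
      _ ≤ (ENNReal.ofReal (1/(n+1))).toReal :=
          ENNReal.toReal_mono ENNReal.ofReal_ne_top (le_of_lt (lt_of_le_of_lt hle (hu0 n)))
      _ = 1/(n+1) := ENNReal.toReal_ofReal (by positivity)
  have hbound : ∀ n, ‖∫ p in B n, (fderiv ℝ f p (1,0) + fderiv ℝ g p (0,1))‖ ≤ 4 * (1/(n+1)) := by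
    intro n
    rw [hdivthm n]
    have h1 : ‖∫ x in (-(u n))..(u n), g (x, u n)‖ ≤ 1/(n+1) := by
      apply hterm _ n
      rw [hs]
      exact le_add_of_le_of_nonneg (le_add_left (le_refl _)) zero_le
    have h2 : ‖∫ x in (-(u n))..(u n), g (x, -(u n))‖ ≤ 1/(n+1) := by
      apply hterm _ n
      rw [hs]
      exact le_add_left (le_refl _)
    have h3 : ‖∫ y in (-(u n))..(u n), f (u n, y)‖ ≤ 1/(n+1) := by
      apply hterm _ n
      rw [hs]
      exact le_add_of_le_of_nonneg (le_add_of_le_of_nonneg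
        (le_add_of_le_of_nonneg (le_refl _) zero_le) zero_le) zero_le
    have h4 : ‖∫ y in (-(u n))..(u n), f (-(u n), y)‖ ≤ 1/(n+1) := by
      apply hterm _ n
      rw [hs]
      exact le_add_of_le_of_nonneg (le_add_of_le_of_nonneg
        (le_add_left (le_refl _)) zero_le) zero_le
    calc ‖(((∫ x in (-(u n))..(u n), g (x, u n)) - ∫ x in (-(u n))..(u n), g (x, -(u n))) +
          ∫ y in (-(u n))..(u n), f (u n, y)) - ∫ y in (-(u n))..(u n), f (-(u n), y)‖
        ≤ ‖((∫ x in (-(u n))..(u n), g (x, u n)) - ∫ x in (-(u n))..(u n), g (x, -(u n))) +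
          ∫ y in (-(u n))..(u n), f (u n, y)‖ + ‖∫ y in (-(u n))..(u n), f (-(u n), y)‖ :=
          norm_sub_le _ _
      _ ≤ (‖(∫ x in (-(u n))..(u n), g (x, u n)) - ∫ x in (-(u n))..(u n), g (x, -(u n))‖ +
          ‖∫ y in (-(u n))..(u n), f (u n, y)‖) + ‖∫ y in (-(u n))..(u n), f (-(u n), y)‖ := by
          gcongr
          exact norm_add_le _ _
      _ ≤ ((‖∫ x in (-(u n))..(u n), g (x, u n)‖ + ‖∫ x in (-(u n))..(u n), g (x, -(u n))‖) +
          ‖∫ y in (-(u n))..(u n), f (u n, y)‖) + ‖∫ y in (-(u n))..(u n), f (-(u n), y)‖ := by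
          gcongr
          exact norm_sub_le _ _
      _ ≤ 4 * (1/(n+1)) := by linarith
  -- pass to the limit
  have hmeas : ∀ n, MeasurableSet (B n) := fun n => measurableSet_Icc
  have hmonoB : Monotone B := by
    intro m n hmn
    apply Icc_subset_Icc
    · exact ⟨neg_le_neg (hmono.monotone hmn), neg_le_neg (hmono.monotone hmn)⟩
    · exact ⟨hmono.monotone hmn, hmono.monotone hmn⟩
  have hunion : ⋃ n, B n = univ := by
    apply eq_univ_of_forall
    intro p
    obtain ⟨n, hn⟩ := exists_nat_gt (max |p.1| |p.2|)
    have h1 : |p.1| < u n := lt_trans (lt_of_le_of_lt (le_max_left _ _) hn) (hgt n)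
    have h2 : |p.2| < u n := lt_trans (lt_of_le_of_lt (le_max_right _ _) hn) (hgt n)
    rw [abs_lt] at h1 h2
    exact mem_iUnion.2 ⟨n, ⟨⟨h1.1.le, h2.1.le⟩, ⟨h1.2.le, h2.2.le⟩⟩⟩
  have hlim := tendsto_setIntegral_of_monotone hmeas hmonoB
    (by rw [hunion]; exact hdiv.integrableOn)
  rw [hunion, MeasureTheory.setIntegral_univ] at hlim
  have hlim0 : Tendsto (fun n => ∫ p in B n, (fderiv ℝ f p (1,0) + fderiv ℝ g p (0,1)))
      atTop (nhds 0) := by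
    apply squeeze_zero_norm hbound
    have h4 : Tendsto (fun n : ℕ => 4 * (1/((n:ℝ)+1))) atTop (nhds (4 * 0)) :=
      Tendsto.const_mul 4 tendsto_one_div_add_atTop_nhds_zero_nat
    simpa using h4
  exact tendsto_nhds_unique hlim hlim0

lemma green_euclidean (φ : EuclideanSpace ℝ (Fin 2) → ℂ) (hφ : ContDiff ℝ 2 φ)
    (hφ2 : MemLp φ 2 volume) (hφ' : MemLp (fun x => fderiv ℝ φ x) 2 volume)
    (hL : Integrable (fun x => (starRingEnd ℂ) (φ x) * lapl φ x) volume) :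
    ∃ S : ℝ, 0 ≤ S ∧ (∫ x, (starRingEnd ℂ) (φ x) * lapl φ x) = -(S:ℂ) := by
  set T : (ℝ × ℝ) ≃L[ℝ] EuclideanSpace ℝ (Fin 2) :=
    (ContinuousLinearEquiv.finTwoArrow ℝ ℝ).symm.trans (EuclideanSpace.equiv (Fin 2) ℝ).symm
    with hT
  set Tm : (ℝ × ℝ) ≃ᵐ EuclideanSpace ℝ (Fin 2) :=
    (MeasurableEquiv.finTwoArrow (α := ℝ)).symm.trans (MeasurableEquiv.toLp 2 (Fin 2 → ℝ))
    with hTm'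
  have hcoe : ⇑Tm = ⇑T := rfl
  have hTmp : MeasurePreserving (⇑Tm) volume volume :=
    ((EuclideanSpace.volume_preserving_symm_measurableEquiv_toLp (Fin 2)).symm).comp
      ((volume_preserving_finTwoArrow ℝ).symm)
  have hTemb : MeasurableEmbedding (⇑Tm) := Tm.measurableEmbedding
  have hT0 : T (1,0) = EuclideanSpace.single 0 1 := by ext j; fin_cases j <;> rfl
  have hT1 : T (0,1) = EuclideanSpace.single 1 1 := by ext j; fin_cases j <;> rfl
  set Φ : ℝ × ℝ → ℂ := fun p => φ (T p) with hΦ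
  have hΦc2 : ContDiff ℝ 2 Φ := hφ.comp (T.contDiff)
  have hΦd : Differentiable ℝ Φ := hΦc2.differentiable two_ne_zero
  have hφd : Differentiable ℝ φ := hφ.differentiable two_ne_zero
  have hfed : ∀ p, fderiv ℝ Φ p = (fderiv ℝ φ (T p)).comp (T : (ℝ×ℝ) →L[ℝ] _) := by
    intro p
    rw [hΦ]
    rw [show (fun p => φ (T p)) = φ ∘ ⇑T from rfl]
    rw [fderiv_comp (x := p) (hφd _) T.differentiable.differentiableAt]
    rw [T.fderiv]
  have hfedv : ∀ p v, fderiv ℝ Φ p v = fderiv ℝ φ (T p) (T v) := by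
    intro p v; rw [hfed]; rfl
  -- the two partial-derivative component functions of φ
  set D : Fin 2 → (EuclideanSpace ℝ (Fin 2) → ℂ) :=
    fun i => (fun y => fderiv ℝ φ y (EuclideanSpace.single i 1)) with hD
  have hDc : ∀ i, ContDiff ℝ 1 (D i) := by
    intro i
    exact (hφ.fderiv_right (le_refl 2)).clm_apply contDiff_const
  have hslice0 : (fun q => fderiv ℝ Φ q (1,0)) = (D 0) ∘ ⇑T := by
    funext q; rw [hfedv, hT0]; rfl
  have hslice1 : (fun q => fderiv ℝ Φ q (0,1)) = (D 1) ∘ ⇑T := by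
    funext q; rw [hfedv, hT1]; rfl
  -- F and G
  set F : ℝ × ℝ → ℂ := fun p => (starRingEnd ℂ) (Φ p) * fderiv ℝ Φ p (1,0) with hF
  set G : ℝ × ℝ → ℂ := fun p => (starRingEnd ℂ) (Φ p) * fderiv ℝ Φ p (0,1) with hG
  have hconj : ∀ p : ℝ × ℝ, HasFDerivAt (fun q => (starRingEnd ℂ) (Φ q))
      ((Complex.conjCLE.toContinuousLinearMap).comp (fderiv ℝ Φ p)) p := by
    intro p
    exact (Complex.conjCLE.hasFDerivAt).comp p (hΦd p).hasFDerivAt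
  have hd2 : ∀ (v : ℝ × ℝ), Differentiable ℝ (fun q => fderiv ℝ Φ q v) := by
    intro v
    exact (((hΦc2.fderiv_right (le_refl 2)).clm_apply contDiff_const).differentiable one_ne_zero)
  -- pointwise divergence identity
  have hdiveq : ∀ p, fderiv ℝ F p (1,0) + fderiv ℝ G p (0,1)
      = (((‖fderiv ℝ Φ p (1,0)‖^2 + ‖fderiv ℝ Φ p (0,1)‖^2 : ℝ)) : ℂ)
        + (starRingEnd ℂ) (Φ p) * lapl φ (T p) := by
    intro p
    have hFderiv : ∀ v : ℝ × ℝ, fderiv ℝ (fun q => (starRingEnd ℂ) (Φ q) * fderiv ℝ Φ q v) p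
        = (starRingEnd ℂ) (Φ p) • (fderiv ℝ (fun q => fderiv ℝ Φ q v) p)
          + (fderiv ℝ Φ p v) • ((Complex.conjCLE.toContinuousLinearMap).comp (fderiv ℝ Φ p)) := by
      intro v
      exact ((hconj p).mul ((hd2 v) p).hasFDerivAt).fderiv
    have e1 : fderiv ℝ F p (1,0) = (starRingEnd ℂ) (Φ p) * (fderiv ℝ (fun q => fderiv ℝ Φ q (1,0)) p (1,0))
        + (fderiv ℝ Φ p (1,0)) * (starRingEnd ℂ) (fderiv ℝ Φ p (1,0)) := by
      rw [hF, hFderiv (1,0)]; rfl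
    have e2 : fderiv ℝ G p (0,1) = (starRingEnd ℂ) (Φ p) * (fderiv ℝ (fun q => fderiv ℝ Φ q (0,1)) p (0,1))
        + (fderiv ℝ Φ p (0,1)) * (starRingEnd ℂ) (fderiv ℝ Φ p (0,1)) := by
      rw [hG, hFderiv (0,1)]; rfl
    have hsec0 : fderiv ℝ (fun q => fderiv ℝ Φ q (1,0)) p (1,0)
        = fderiv ℝ (D 0) (T p) (EuclideanSpace.single 0 1) := by
      rw [hslice0, fderiv_comp (x := p) ((hDc 0).differentiable one_ne_zero _)
        T.differentiable.differentiableAt, T.fderiv]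
      show fderiv ℝ (D 0) (T p) (T (1,0)) = _
      rw [hT0]
    have hsec1 : fderiv ℝ (fun q => fderiv ℝ Φ q (0,1)) p (0,1)
        = fderiv ℝ (D 1) (T p) (EuclideanSpace.single 1 1) := by
      rw [hslice1, fderiv_comp (x := p) ((hDc 1).differentiable one_ne_zero _)
        T.differentiable.differentiableAt, T.fderiv]
      show fderiv ℝ (D 1) (T p) (T (0,1)) = _
      rw [hT1]
    have hlapl : lapl φ (T p) = fderiv ℝ (D 0) (T p) (EuclideanSpace.single 0 1)
        + fderiv ℝ (D 1) (T p) (EuclideanSpace.single 1 1) := by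
      rw [lapl, Fin.sum_univ_two]
    have habs : ∀ z : ℂ, z * (starRingEnd ℂ) z = ((‖z‖^2 : ℝ) : ℂ) := by
      intro z
      rw [Complex.mul_conj]
      norm_cast
      rw [Complex.normSq_eq_norm_sq]
    rw [e1, e2, hsec0, hsec1, hlapl]
    rw [habs, habs]
    push_cast
    ring
  -- continuity facts
  have hΦcont : Continuous Φ := hΦc2.continuous
  have hDΦcont : Continuous (fun p => fderiv ℝ Φ p) := (hΦc2.fderiv_right (m := 1) (by norm_num)).continuous
  have hceval : ∀ v : ℝ × ℝ, Continuous fun p => fderiv ℝ Φ p v :=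
    fun v => hDΦcont.clm_apply continuous_const
  have hFd : Differentiable ℝ F := by
    intro p
    exact (((hconj p).mul ((hd2 (1,0)) p).hasFDerivAt)).differentiableAt
  have hGd : Differentiable ℝ G := by
    intro p
    exact (((hconj p).mul ((hd2 (0,1)) p).hasFDerivAt)).differentiableAt
  -- pointwise bounds for F and G
  have hbv : ∀ (v : ℝ × ℝ) (i : Fin 2), T v = EuclideanSpace.single i 1 →
      ∀ p, ‖(starRingEnd ℂ) (Φ p) * fderiv ℝ Φ p v‖ ≤ ‖φ (T p)‖ * ‖fderiv ℝ φ (T p)‖ := by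
    intro v i hv p
    rw [norm_mul, RCLike.norm_conj, hfedv, hv]
    rw [hΦ]
    gcongr
    calc ‖fderiv ℝ φ (T p) (EuclideanSpace.single i 1)‖
        ≤ ‖fderiv ℝ φ (T p)‖ * ‖EuclideanSpace.single i (1:ℝ)‖ :=
          (fderiv ℝ φ (T p)).le_opNorm _
      _ = ‖fderiv ℝ φ (T p)‖ := by rw [EuclideanSpace.norm_single]; simp
  have hHint : Integrable (fun x => ‖φ x‖ * ‖fderiv ℝ φ x‖) volume :=
    integrable_norm_mul_norm hφ2 hφ'
  have hHTint : Integrable ((fun x => ‖φ x‖ * ‖fderiv ℝ φ x‖) ∘ ⇑Tm) volume :=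
    (hTmp.integrable_comp_emb hTemb).2 hHint
  have hFint : Integrable F volume := by
    refine Integrable.mono' hHTint ?_ ?_
    · exact ((Complex.continuous_conj.comp hΦcont).mul (hceval (1,0))).aestronglyMeasurable
    · filter_upwards with p
      rw [hcoe]
      exact hbv (1,0) 0 hT0 p
  have hGint : Integrable G volume := by
    refine Integrable.mono' hHTint ?_ ?_
    · exact ((Complex.continuous_conj.comp hΦcont).mul (hceval (0,1))).aestronglyMeasurable
    · filter_upwards with p
      rw [hcoe]
      exact hbv (0,1) 1 hT1 p
  -- integrability of the divergence pieces
  have hgrad2 : ∀ p, ‖fderiv ℝ Φ p (1,0)‖^2 + ‖fderiv ℝ Φ p (0,1)‖^2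
      ≤ 2 * ‖fderiv ℝ φ (T p)‖^(2:ℕ) := by
    intro p
    have h0 : ‖fderiv ℝ Φ p (1,0)‖ ≤ ‖fderiv ℝ φ (T p)‖ := by
      rw [hfedv, hT0]
      calc ‖fderiv ℝ φ (T p) (EuclideanSpace.single 0 1)‖
          ≤ ‖fderiv ℝ φ (T p)‖ * ‖EuclideanSpace.single 0 (1:ℝ)‖ :=
            (fderiv ℝ φ (T p)).le_opNorm _
        _ = ‖fderiv ℝ φ (T p)‖ := by rw [EuclideanSpace.norm_single]; simp
    have h1 : ‖fderiv ℝ Φ p (0,1)‖ ≤ ‖fderiv ℝ φ (T p)‖ := by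
      rw [hfedv, hT1]
      calc ‖fderiv ℝ φ (T p) (EuclideanSpace.single 1 1)‖
          ≤ ‖fderiv ℝ φ (T p)‖ * ‖EuclideanSpace.single 1 (1:ℝ)‖ :=
            (fderiv ℝ φ (T p)).le_opNorm _
        _ = ‖fderiv ℝ φ (T p)‖ := by rw [EuclideanSpace.norm_single]; simp
    have hn0 : (0:ℝ) ≤ ‖fderiv ℝ Φ p (1,0)‖ := norm_nonneg _
    have hn1 : (0:ℝ) ≤ ‖fderiv ℝ Φ p (0,1)‖ := norm_nonneg _
    nlinarith
  have hpart1r : Integrable (fun p => ‖fderiv ℝ Φ p (1,0)‖^2 + ‖fderiv ℝ Φ p (0,1)‖^2) volume := by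
    have h2 : Integrable ((fun x => 2 * ‖fderiv ℝ φ x‖^(2:ℕ)) ∘ ⇑Tm) volume :=
      (hTmp.integrable_comp_emb hTemb).2 (hφ'.integrable_norm_sq.const_mul 2)
    refine Integrable.mono' h2 ?_ ?_
    · exact (((hceval (1,0)).norm.pow 2).add ((hceval (0,1)).norm.pow 2)).aestronglyMeasurable
    · filter_upwards with p
      rw [Real.norm_of_nonneg (by positivity), hcoe]
      exact hgrad2 p
  have hpart1 : Integrable (fun p => (((‖fderiv ℝ Φ p (1,0)‖^2 + ‖fderiv ℝ Φ p (0,1)‖^2 : ℝ)) : ℂ)) volume :=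
    hpart1r.ofReal
  have hpart2 : Integrable (fun p => (starRingEnd ℂ) (Φ p) * lapl φ (T p)) volume := by
    have := (hTmp.integrable_comp_emb hTemb).2 hL
    refine this.congr ?_
    filter_upwards with p
    rw [hcoe]
    rfl
  have hdivint : Integrable (fun p => fderiv ℝ F p (1,0) + fderiv ℝ G p (0,1)) volume := by
    refine (hpart1.add hpart2).congr ?_
    filter_upwards with p
    rw [Pi.add_apply, hdiveq p]
  have hzero := div_integral_zero F G hFd hGd hFint hGint hdivint
  have hsplit : ∫ p, (fderiv ℝ F p (1,0) + fderiv ℝ G p (0,1))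
      = (∫ p, (((‖fderiv ℝ Φ p (1,0)‖^2 + ‖fderiv ℝ Φ p (0,1)‖^2 : ℝ)) : ℂ))
        + ∫ p, (starRingEnd ℂ) (Φ p) * lapl φ (T p) := by
    rw [← integral_add hpart1 hpart2]
    exact integral_congr_ae (Eventually.of_forall fun p => hdiveq p)
  set S : ℝ := ∫ p, (‖fderiv ℝ Φ p (1,0)‖^2 + ‖fderiv ℝ Φ p (0,1)‖^2) with hS
  have hS0 : 0 ≤ S := integral_nonneg (fun p => by positivity)
  have hSc : (∫ p, (((‖fderiv ℝ Φ p (1,0)‖^2 + ‖fderiv ℝ Φ p (0,1)‖^2 : ℝ)) : ℂ)) = (S : ℂ) := by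
    rw [hS]
    exact integral_ofReal
  have htrans : (∫ p, (starRingEnd ℂ) (Φ p) * lapl φ (T p))
      = ∫ x, (starRingEnd ℂ) (φ x) * lapl φ x := by
    have := hTmp.integral_comp' (f := Tm) (fun x => (starRingEnd ℂ) (φ x) * lapl φ x)
    rw [← this]
    rfl
  refine ⟨S, hS0, ?_⟩
  rw [hsplit, hSc, htrans] at hzero
  linear_combination hzero

-- Cauchy-Schwarz for integrals of nonnegative functions
lemma integral_cs {α : Type*} [MeasurableSpace α] {μ : Measure α} {f g : α → ℝ}
    (hf0 : ∀ x, 0 ≤ f x) (hg0 : ∀ x, 0 ≤ g x)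
    (hfm : AEStronglyMeasurable f μ) (hgm : AEStronglyMeasurable g μ)
    (hf2 : Integrable (fun x => f x ^ (2:ℕ)) μ) (hg2 : Integrable (fun x => g x ^ (2:ℕ)) μ) :
    ∫ x, f x * g x ∂μ ≤ Real.sqrt (∫ x, f x ^ (2:ℕ) ∂μ) * Real.sqrt (∫ x, g x ^ (2:ℕ) ∂μ) := by
  have hpq : (2:ℝ).HolderConjugate 2 := Real.HolderConjugate.two_two
  have h2 : ENNReal.ofReal (2:ℝ) = 2 := by
    rw [ENNReal.ofReal_ofNat]
  have hfL : MemLp f (ENNReal.ofReal (2:ℝ)) μ := by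
    rw [h2]
    exact (memLp_two_iff_integrable_sq hfm).2 (by simpa [sq] using hf2)
  have hgL : MemLp g (ENNReal.ofReal (2:ℝ)) μ := by
    rw [h2]
    exact (memLp_two_iff_integrable_sq hgm).2 (by simpa [sq] using hg2)
  have := integral_mul_le_Lp_mul_Lq_of_nonneg hpq (Eventually.of_forall hf0)
    (Eventually.of_forall hg0) hfL hgL
  have hconv : ∀ h : α → ℝ, (∫ x, h x ^ (2:ℝ) ∂μ) = ∫ x, h x ^ (2:ℕ) ∂μ := by
    intro h
    congr 1
    funext x
    rw [show ((2:ℝ)) = ((2:ℕ):ℝ) by norm_num, Real.rpow_natCast]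
  rw [hconv f, hconv g] at this
  refine le_trans this ?_
  rw [Real.sqrt_eq_rpow, Real.sqrt_eq_rpow]

-- exponential decay dominated by cubic decay
lemma exp_decay_le (a t : ℝ) (ha : 0 < a) (ht : 0 ≤ t) :
    Real.exp (-(a*t)) ≤ (27 * (max 1 (1/a))^3) / (1+t)^3 := by
  have h1t : (0:ℝ) < 1 + t := by linarith
  have hat : 0 ≤ a * t := by positivity
  have hmax1 : (1:ℝ) ≤ max 1 (1/a) := le_max_left _ _
  have hmaxa : 1/a ≤ max 1 (1/a) := le_max_right _ _
  have hexp : (1 + a*t/3)^3 ≤ Real.exp (a*t) := by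
    calc (1 + a*t/3)^3 ≤ (Real.exp (a*t/3))^3 := by
          apply pow_le_pow_left₀ (by positivity)
          linarith [Real.add_one_le_exp (a*t/3)]
      _ = Real.exp (a*t) := by
          rw [← Real.exp_nat_mul]
          ring_nf
  have hmaxle : 1 + t ≤ (max 1 (1/a)) * (1 + a*t) := by
    have h1 : (1:ℝ) ≤ max 1 (1/a) * 1 := by simpa using hmax1
    have h2 : t ≤ max 1 (1/a) * (a*t) := by
      calc t = (1/a) * (a*t) := by field_simp
        _ ≤ max 1 (1/a) * (a*t) := by gcongr
    nlinarith [hmax1, hat]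
  have e1 : (1+t)^3 ≤ (max 1 (1/a))^3 * (1+a*t)^3 := by
    rw [← mul_pow]
    exact pow_le_pow_left₀ h1t.le hmaxle 3
  have e2 : (1+a*t)^3 ≤ 27 * (1+a*t/3)^3 := by
    rw [show (27:ℝ) = 3^3 by norm_num, ← mul_pow]
    apply pow_le_pow_left₀ (by positivity)
    linarith
  have hchain : (1+t)^3 ≤ (27 * (max 1 (1/a))^3) * Real.exp (a*t) := by
    calc (1+t)^3 ≤ (max 1 (1/a))^3 * (1+a*t)^3 := e1
      _ ≤ (max 1 (1/a))^3 * (27 * (1+a*t/3)^3) := by gcongr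
      _ ≤ (max 1 (1/a))^3 * (27 * Real.exp (a*t)) := by gcongr
      _ = (27 * (max 1 (1/a))^3) * Real.exp (a*t) := by ring
  rw [Real.exp_neg, le_div_iff₀ (by positivity : (0:ℝ) < (1+t)^3)]
  calc (Real.exp (a*t))⁻¹ * (1+t)^3
      ≤ (Real.exp (a*t))⁻¹ * (27 * (max 1 (1/a))^3 * Real.exp (a*t)) := by
        gcongr
    _ = 27 * (max 1 (1/a))^3 := by
        field_simp

set_option maxHeartbeats 1000000 in
/-- Any eigenvalue of the two-dimensional NLEP with nonnegative real part is bounded,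
uniformly in `τ̃ > 0`. -/
theorem nlep2_eigenvalue_bound (w : EuclideanSpace ℝ (Fin 2) → ℝ)
    (hw : IsGroundState 2 w) :
    ∃ C > (0:ℝ), ∀ τ : ℝ, 0 < τ → ∀ (lam : ℂ) (φ : EuclideanSpace ℝ (Fin 2) → ℂ),
      IsNLEP2Eigenpair w τ lam φ → 0 ≤ lam.re → ‖lam‖ ≤ C := by
  classical
  have hwcont : Continuous w := hw.smooth.continuous
  set M : ℝ := w 0 with hM
  have hMpos : 0 < M := hw.pos 0
  have hMle : ∀ x, w x ≤ M := fun x => hw.radialDecreasing 0 x (by simp)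
  obtain ⟨C₀, a, hC₀, ha, hdecay⟩ := hw.expDecay
  have hwint : Integrable w volume := by
    have hmaj : Integrable (fun x : EuclideanSpace ℝ (Fin 2) =>
        (C₀ * (27 * (max 1 (1/a))^3)) * (1 + ‖x‖) ^ (-(3:ℝ))) volume :=
      (integrable_one_add_norm (by rw [finrank_euclideanSpace_fin]; norm_num)).const_mul _
    refine hmaj.mono' hwcont.aestronglyMeasurable ?_
    filter_upwards with x
    have h1 := (hdecay x).1
    have h2 : Real.exp (-(a * ‖x‖)) ≤ (27 * (max 1 (1/a))^3) / (1+‖x‖)^3 :=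
      exp_decay_le a ‖x‖ ha (norm_nonneg x)
    have h3 : ((1:ℝ) + ‖x‖) ^ (-(3:ℝ)) = 1/(1+‖x‖)^(3:ℕ) := by
      rw [Real.rpow_neg (by positivity), show ((3:ℝ)) = ((3:ℕ):ℝ) by norm_num,
        Real.rpow_natCast, one_div]
    rw [Real.norm_eq_abs]
    calc |w x| ≤ C₀ * Real.exp (-a * ‖x‖) := h1
      _ = C₀ * Real.exp (-(a * ‖x‖)) := by ring_nf
      _ ≤ C₀ * ((27 * (max 1 (1/a))^3) / (1+‖x‖)^3) := by gcongr
      _ = C₀ * (27 * (max 1 (1/a))^3) * ((1:ℝ)+‖x‖)^(-(3:ℝ)) := by rw [h3]; ring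
  have hwpow : ∀ k : ℕ, Integrable (fun x => w x ^ (k+1)) volume := by
    intro k
    refine (hwint.const_mul (M^k)).mono' ((hwcont.pow _).aestronglyMeasurable) ?_
    filter_upwards with x
    rw [Real.norm_eq_abs, abs_of_pos (pow_pos (hw.pos x) _), pow_succ]
    have h1 : w x ^ k ≤ M ^ k := pow_le_pow_left₀ (hw.pos x).le (hMle x) k
    exact mul_le_mul_of_nonneg_right h1 (hw.pos x).le
  have hw2 : Integrable (fun x => w x ^ 2) volume := by have := hwpow 1; norm_num at this; exact this
  have hw3 : Integrable (fun x => w x ^ 3) volume := by have := hwpow 2; norm_num at this; exact this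
  have hw4 : Integrable (fun x => w x ^ 4) volume := by have := hwpow 3; norm_num at this; exact this
  have hw6 : Integrable (fun x => w x ^ 6) volume := by have := hwpow 5; norm_num at this; exact this
  have hwkpos : ∀ k : ℕ, Integrable (fun x => w x ^ k) volume → 0 < ∫ x, w x ^ k := by
    intro k hint
    rw [integral_pos_iff_support_of_nonneg (fun x => pow_nonneg (hw.pos x).le k) hint]
    have hsupp : Function.support (fun x => w x ^ k) = univ :=
      eq_univ_of_forall fun x => (pow_pos (hw.pos x) k).ne'
    rw [hsupp]
    exact isOpen_univ.measure_pos volume univ_nonempty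
  set P2 : ℝ := ∫ x, w x ^ 2 with hP2def
  set P3 : ℝ := ∫ x, w x ^ 3 with hP3def
  set P4 : ℝ := ∫ x, w x ^ 4 with hP4def
  set P6 : ℝ := ∫ x, w x ^ 6 with hP6def
  have hP2 : 0 < P2 := hwkpos 2 hw2
  have hP3 : 0 < P3 := hwkpos 3 hw3
  have hP4 : 0 < P4 := hwkpos 4 hw4
  have hP6 : 0 < P6 := hwkpos 6 hw6
  set D : ℝ := (3*Real.sqrt P4/P3 + 2*Real.sqrt P2/P2) * Real.sqrt P6 with hDdef
  have hD0 : 0 ≤ D := by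
    apply mul_nonneg _ (Real.sqrt_nonneg _)
    apply add_nonneg
    · exact div_nonneg (by positivity) hP3.le
    · exact div_nonneg (by positivity) hP2.le
  refine ⟨3*M^2 + 2*D + 1, by nlinarith, ?_⟩
  intro τ hτ lam φ hep hre
  obtain ⟨hC2, ⟨x₀, hx₀⟩, hφ2, hφ'2, hden, heqn⟩ := hep
  have hφcont : Continuous φ := hC2.continuous
  set c1 : ℂ := 3 / (1 + (τ:ℂ)*lam) with hc1def
  set c2 : ℂ := 2*(τ:ℂ)*lam / (1 + (τ:ℂ)*lam) with hc2def
  set K1 : ℂ := (∫ y, (w y:ℂ)^2 * φ y) / (∫ y, (w y:ℂ)^3) with hK1def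
  set K2 : ℂ := (∫ y, (w y:ℂ) * φ y) / (∫ y, (w y:ℂ)^2) with hK2def
  set c : ℂ := c1*K1 + c2*K2 with hcdef
  have hlapl : ∀ x, lapl φ x = lam * φ x + φ x - 3*(w x:ℂ)^2*φ x + c*(w x:ℂ)^3 := by
    intro x
    have h := heqn x
    rw [hcdef, hc1def, hc2def, hK1def, hK2def]
    linear_combination h
  set N : ℝ := ∫ x, ‖φ x‖^2 with hNdef
  have hNint : Integrable (fun x => ‖φ x‖^2) volume := hφ2.integrable_norm_sq
  have hNpos : 0 < N := by
    rw [hNdef, integral_pos_iff_support_of_nonneg (fun x => by positivity) hNint]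
    have hsupp : Function.support (fun x => ‖φ x‖^2) = {x | φ x ≠ 0} := by
      ext x
      simp [Function.support]
    rw [hsupp]
    exact (isOpen_compl_singleton.preimage hφcont).measure_pos volume ⟨x₀, hx₀⟩
  have habs' : ∀ z : ℂ, (starRingEnd ℂ) z * z = ((‖z‖^2 : ℝ) : ℂ) := by
    intro z
    rw [mul_comm, Complex.mul_conj]
    norm_cast
    rw [Complex.normSq_eq_norm_sq]
  set g : EuclideanSpace ℝ (Fin 2) → ℂ := fun x => lam * ((‖φ x‖^2:ℝ):ℂ) + ((‖φ x‖^2:ℝ):ℂ)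
      - 3*(w x:ℂ)^2*((‖φ x‖^2:ℝ):ℂ) + c * ((starRingEnd ℂ) (φ x) * (w x:ℂ)^3) with hgdef
  have hpt : ∀ x, (starRingEnd ℂ) (φ x) * lapl φ x = g x := by
    intro x
    show (starRingEnd ℂ) (φ x) * lapl φ x = lam * ((‖φ x‖^2:ℝ):ℂ) + ((‖φ x‖^2:ℝ):ℂ)
      - 3*(w x:ℂ)^2*((‖φ x‖^2:ℝ):ℂ) + c * ((starRingEnd ℂ) (φ x) * (w x:ℂ)^3)
    rw [hlapl x, ← habs' (φ x)]
    ring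
  have i2 : Integrable (fun x => ((‖φ x‖^2:ℝ):ℂ)) volume := hNint.ofReal
  have i1 : Integrable (fun x => lam * ((‖φ x‖^2:ℝ):ℂ)) volume := i2.const_mul lam
  have i3 : Integrable (fun x => 3*(w x:ℂ)^2*((‖φ x‖^2:ℝ):ℂ)) volume := by
    refine (hNint.const_mul (3*M^2)).mono' ?_ ?_
    · exact ((continuous_const.mul ((Complex.continuous_ofReal.comp hwcont).pow 2)).mul
        (Complex.continuous_ofReal.comp (hφcont.norm.pow 2))).aestronglyMeasurable
    · filter_upwards with x
      have hval : ‖3*(w x:ℂ)^2*((‖φ x‖^2:ℝ):ℂ)‖ = 3 * w x^2 * ‖φ x‖^2 := by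
        simp only [norm_mul, norm_pow, Complex.norm_real, Real.norm_eq_abs,
          abs_of_nonneg (hw.pos x).le, abs_of_nonneg (show (0:ℝ) ≤ ‖φ x‖^2 by positivity)]
        norm_num
      rw [hval]
      have h1 : w x^2 ≤ M^2 := pow_le_pow_left₀ (hw.pos x).le (hMle x) 2
      nlinarith [norm_nonneg (φ x), sq_nonneg ‖φ x‖]
  have iφw3 : Integrable (fun x => (starRingEnd ℂ) (φ x) * (w x:ℂ)^3) volume := by
    refine ((hNint.add hw6).div_const 2).mono' ?_ ?_
    · exact ((Complex.continuous_conj.comp hφcont).mul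
        ((Complex.continuous_ofReal.comp hwcont).pow 3)).aestronglyMeasurable
    · filter_upwards with x
      have hval : ‖(starRingEnd ℂ) (φ x) * (w x:ℂ)^3‖ = ‖φ x‖ * w x^3 := by
        simp only [norm_mul, RCLike.norm_conj, norm_pow, Complex.norm_real, Real.norm_eq_abs,
          abs_of_nonneg (hw.pos x).le]
      rw [hval]
      simp only [Pi.add_apply]
      have hcube : (w x^3)^2 = w x^6 := by ring
      nlinarith [sq_nonneg (‖φ x‖ - w x^3)]
  have i4 : Integrable (fun x => c * ((starRingEnd ℂ) (φ x) * (w x:ℂ)^3)) volume :=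
    iφw3.const_mul c
  have hgint : Integrable g volume := by
    rw [hgdef]
    exact ((i1.add i2).sub i3).add i4
  have hL : Integrable (fun x => (starRingEnd ℂ) (φ x) * lapl φ x) volume :=
    hgint.congr (Eventually.of_forall fun x => (hpt x).symm)
  obtain ⟨S, hS0, hgreen⟩ := green_euclidean φ hC2 hφ2 hφ'2 hL
  set T' : ℝ := ∫ x, 3 * w x^2 * ‖φ x‖^2 with hT'def
  set J : ℂ := ∫ x, (starRingEnd ℂ) (φ x) * (w x:ℂ)^3 with hJdef
  have hi3val : (∫ x, 3*(w x:ℂ)^2*((‖φ x‖^2:ℝ):ℂ)) = ((T':ℝ):ℂ) := by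
    rw [hT'def,
      show (fun x => 3*(w x:ℂ)^2*((‖φ x‖^2:ℝ):ℂ)) = fun x => ((3*w x^2*‖φ x‖^2 : ℝ):ℂ) from
        funext fun x => by push_cast; ring]
    exact integral_ofReal
  have hNval : (∫ x, ((‖φ x‖^2:ℝ):ℂ)) = ((N:ℝ):ℂ) := integral_ofReal
  set q : ℂ := c * J with hqdef
  have j12 : Integrable (fun x => lam * ((‖φ x‖^2:ℝ):ℂ) + ((‖φ x‖^2:ℝ):ℂ)) volume := i1.add i2
  have j123 : Integrable (fun x => lam * ((‖φ x‖^2:ℝ):ℂ) + ((‖φ x‖^2:ℝ):ℂ)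
      - 3*(w x:ℂ)^2*((‖φ x‖^2:ℝ):ℂ)) volume := j12.sub i3
  have hstar : lam * (N:ℂ) + (N:ℂ) - ((T':ℝ):ℂ) + q = -(S:ℂ) := by
    rw [← hgreen, integral_congr_ae (Eventually.of_forall hpt)]
    have hgx : (∫ x, g x) = ∫ x, ((lam * ((‖φ x‖^2:ℝ):ℂ) + ((‖φ x‖^2:ℝ):ℂ)
        - 3*(w x:ℂ)^2*((‖φ x‖^2:ℝ):ℂ)) + c * ((starRingEnd ℂ) (φ x) * (w x:ℂ)^3)) := rfl
    rw [hgx, integral_add j123 i4, integral_sub j12 i3, integral_add i1 i2,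
      integral_const_mul, integral_const_mul, hNval, hi3val, hqdef, hJdef]
  have hRe := congrArg Complex.re hstar
  have hIm := congrArg Complex.im hstar
  simp only [Complex.add_re, Complex.add_im, Complex.sub_re, Complex.sub_im, Complex.mul_re,
    Complex.mul_im, Complex.ofReal_re, Complex.ofReal_im, Complex.neg_re, Complex.neg_im,
    mul_zero, zero_mul, sub_zero, add_zero, zero_add] at hRe hIm
  -- hRe : lam.re * N + N - T' + q.re = -S
  -- hIm : lam.im * N + q.im = 0
  -- bound T'
  have i3real : Integrable (fun x => 3 * w x^2 * ‖φ x‖^2) volume := by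
    refine (hNint.const_mul (3*M^2)).mono' ?_ ?_
    · exact ((continuous_const.mul (hwcont.pow 2)).mul (hφcont.norm.pow 2)).aestronglyMeasurable
    · filter_upwards with x
      rw [Real.norm_of_nonneg (by positivity)]
      have h1 : w x^2 ≤ M^2 := pow_le_pow_left₀ (hw.pos x).le (hMle x) 2
      nlinarith [sq_nonneg ‖φ x‖, hMpos]
  have hT'le : T' ≤ 3*M^2*N := by
    rw [hT'def, hNdef, ← integral_const_mul]
    apply integral_mono i3real (hNint.const_mul _)
    intro x
    dsimp only
    have h1 : w x^2 ≤ M^2 := pow_le_pow_left₀ (hw.pos x).le (hMle x) 2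
    nlinarith [sq_nonneg ‖φ x‖]
  -- Cauchy-Schwarz bounds
  have hsqN : Real.sqrt N * Real.sqrt N = N := Real.mul_self_sqrt hNpos.le
  have hJb : ‖J‖ ≤ Real.sqrt P6 * Real.sqrt N := by
    rw [hJdef]
    refine le_trans (norm_integral_le_integral_norm _) ?_
    have heq : (fun x => ‖(starRingEnd ℂ) (φ x) * (w x:ℂ)^3‖) = fun x => w x^3 * ‖φ x‖ := by
      funext x
      simp only [norm_mul, RCLike.norm_conj, norm_pow, Complex.norm_real, Real.norm_eq_abs,
        abs_of_nonneg (hw.pos x).le]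
      ring
    rw [heq]
    have hcs := integral_cs (μ := volume) (f := fun x => w x^3) (g := fun x => ‖φ x‖)
      (fun x => pow_nonneg (hw.pos x).le 3) (fun x => norm_nonneg _)
      ((hwcont.pow 3).aestronglyMeasurable) (hφcont.norm.aestronglyMeasurable)
      (by simpa [show ∀ x:EuclideanSpace ℝ (Fin 2), (w x^3)^2 = w x^6 from fun x => by ring] using hw6)
      (by simpa [sq] using hNint)
    refine le_trans hcs ?_
    have h6 : (∫ x, (w x^3)^2) = P6 := by
      rw [hP6def]; congr 1; funext x; ring
    have hN2 : (∫ x, ‖φ x‖^2) = N := rfl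
    rw [h6]
  have hnum1 : ‖(∫ y, (w y:ℂ)^2 * φ y)‖ ≤ Real.sqrt P4 * Real.sqrt N := by
    refine le_trans (norm_integral_le_integral_norm _) ?_
    have heq : (fun y => ‖(w y:ℂ)^2 * φ y‖) = fun y => w y^2 * ‖φ y‖ := by
      funext y
      simp only [norm_mul, norm_pow, Complex.norm_real, Real.norm_eq_abs,
        abs_of_nonneg (hw.pos y).le]
    rw [heq]
    have hcs := integral_cs (μ := volume) (f := fun x => w x^2) (g := fun x => ‖φ x‖)
      (fun x => pow_nonneg (hw.pos x).le 2) (fun x => norm_nonneg _)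
      ((hwcont.pow 2).aestronglyMeasurable) (hφcont.norm.aestronglyMeasurable)
      (by simpa [show ∀ x:EuclideanSpace ℝ (Fin 2), (w x^2)^2 = w x^4 from fun x => by ring] using hw4)
      (by simpa [sq] using hNint)
    refine le_trans hcs ?_
    have h4 : (∫ x, (w x^2)^2) = P4 := by
      rw [hP4def]; congr 1; funext x; ring
    rw [h4]
  have hnum2 : ‖(∫ y, (w y:ℂ) * φ y)‖ ≤ Real.sqrt P2 * Real.sqrt N := by
    refine le_trans (norm_integral_le_integral_norm _) ?_
    have heq : (fun y => ‖(w y:ℂ) * φ y‖) = fun y => w y * ‖φ y‖ := by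
      funext y
      simp only [norm_mul, Complex.norm_real, Real.norm_eq_abs, abs_of_nonneg (hw.pos y).le]
    rw [heq]
    have hcs := integral_cs (μ := volume) (f := fun x => w x) (g := fun x => ‖φ x‖)
      (fun x => (hw.pos x).le) (fun x => norm_nonneg _)
      (hwcont.aestronglyMeasurable) (hφcont.norm.aestronglyMeasurable)
      (by simpa [sq] using hw2)
      (by simpa [sq] using hNint)
    exact hcs
  have hden3 : (∫ y, (w y:ℂ)^3) = ((P3:ℝ):ℂ) := by
    rw [hP3def, show (fun y => ((w y:ℂ))^3) = fun y => ((w y^3 : ℝ):ℂ) from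
      funext fun y => by push_cast; ring]
    exact integral_ofReal
  have hden2 : (∫ y, (w y:ℂ)^2) = ((P2:ℝ):ℂ) := by
    rw [hP2def, show (fun y => ((w y:ℂ))^2) = fun y => ((w y^2 : ℝ):ℂ) from
      funext fun y => by push_cast; ring]
    exact integral_ofReal
  have hK1b : ‖K1‖ ≤ Real.sqrt P4 * Real.sqrt N / P3 := by
    rw [hK1def, norm_div, hden3, Complex.norm_real, Real.norm_eq_abs, abs_of_pos hP3]
    exact (div_le_div_iff_of_pos_right hP3).2 hnum1
  have hK2b : ‖K2‖ ≤ Real.sqrt P2 * Real.sqrt N / P2 := by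
    rw [hK2def, norm_div, hden2, Complex.norm_real, Real.norm_eq_abs, abs_of_pos hP2]
    exact (div_le_div_iff_of_pos_right hP2).2 hnum2
  have hone : (1:ℝ) ≤ ‖(1 + (τ:ℂ)*lam)‖ := by
    have h1 : (1 + (τ:ℂ)*lam).re = 1 + τ*lam.re := by
      simp [Complex.add_re, Complex.mul_re]
    have h2 := Complex.re_le_norm (1 + (τ:ℂ)*lam)
    rw [h1] at h2
    nlinarith [mul_nonneg hτ.le hre]
  have hc1b : ‖c1‖ ≤ 3 := by
    rw [hc1def, norm_div, show ‖(3:ℂ)‖ = 3 from by norm_num]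
    calc (3:ℝ) / ‖(1 + (τ:ℂ)*lam)‖ ≤ 3/1 :=
        div_le_div_of_nonneg_left (by norm_num) (by norm_num) hone
      _ = 3 := by norm_num
  have hzb : ‖((τ:ℂ)*lam)‖ ≤ ‖(1 + (τ:ℂ)*lam)‖ := by
    have h1 : (‖((τ:ℂ)*lam)‖)^2 ≤ (‖(1 + (τ:ℂ)*lam)‖)^2 := by
      rw [Complex.sq_norm, Complex.sq_norm, Complex.normSq_apply, Complex.normSq_apply]
      have hres : ((τ:ℂ)*lam).re = τ*lam.re := by simp [Complex.mul_re]
      have hims : ((τ:ℂ)*lam).im = τ*lam.im := by simp [Complex.mul_im]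
      simp only [Complex.add_re, Complex.add_im, Complex.one_re, Complex.one_im, hres, hims,
        zero_add]
      nlinarith [mul_nonneg hτ.le hre]
    nlinarith [norm_nonneg ((τ:ℂ)*lam), norm_nonneg (1 + (τ:ℂ)*lam)]
  have hc2b : ‖c2‖ ≤ 2 := by
    rw [hc2def, show 2*(τ:ℂ)*lam = 2*((τ:ℂ)*lam) from by ring, norm_div, norm_mul,
      show ‖(2:ℂ)‖ = 2 from by norm_num]
    rw [div_le_iff₀ (lt_of_lt_of_le one_pos hone)]
    nlinarith [hzb, norm_nonneg ((τ:ℂ)*lam)]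
  have hcb : ‖c‖ ≤ (3*Real.sqrt P4/P3 + 2*Real.sqrt P2/P2) * Real.sqrt N := by
    rw [hcdef]
    refine le_trans (norm_add_le _ _) ?_
    rw [norm_mul, norm_mul]
    have b1 : ‖c1‖ * ‖K1‖ ≤ 3 * (Real.sqrt P4 * Real.sqrt N / P3) :=
      mul_le_mul hc1b hK1b (norm_nonneg _) (by norm_num)
    have b2 : ‖c2‖ * ‖K2‖ ≤ 2 * (Real.sqrt P2 * Real.sqrt N / P2) :=
      mul_le_mul hc2b hK2b (norm_nonneg _) (by norm_num)
    calc ‖c1‖ * ‖K1‖ + ‖c2‖ * ‖K2‖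
        ≤ 3 * (Real.sqrt P4 * Real.sqrt N / P3) + 2 * (Real.sqrt P2 * Real.sqrt N / P2) :=
          add_le_add b1 b2
      _ = (3*Real.sqrt P4/P3 + 2*Real.sqrt P2/P2) * Real.sqrt N := by ring
  have hqb : ‖q‖ ≤ D * N := by
    rw [hqdef, norm_mul]
    have hnn : (0:ℝ) ≤ (3*Real.sqrt P4/P3 + 2*Real.sqrt P2/P2) * Real.sqrt N := by
      apply mul_nonneg _ (Real.sqrt_nonneg _)
      apply add_nonneg (div_nonneg (by positivity) hP3.le) (div_nonneg (by positivity) hP2.le)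
    calc ‖c‖ * ‖J‖
        ≤ ((3*Real.sqrt P4/P3 + 2*Real.sqrt P2/P2) * Real.sqrt N) * (Real.sqrt P6 * Real.sqrt N) :=
          mul_le_mul hcb hJb (norm_nonneg _) hnn
      _ = ((3*Real.sqrt P4/P3 + 2*Real.sqrt P2/P2) * Real.sqrt P6) * (Real.sqrt N * Real.sqrt N) :=
          by ring
      _ = D * N := by rw [hsqN, hDdef]
  have hqre : |q.re| ≤ D*N := le_trans (Complex.abs_re_le_norm q) hqb
  have hqim : |q.im| ≤ D*N := le_trans (Complex.abs_im_le_norm q) hqb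
  have hre_bound : lam.re ≤ 3*M^2 + D := by
    have h1 : lam.re * N ≤ (3*M^2 + D) * N := by
      have hq1 := (abs_le.1 hqre).1
      nlinarith [hS0, hT'le]
    exact le_of_mul_le_mul_right h1 hNpos
  have him_bound : |lam.im| ≤ D := by
    have h1 : |lam.im| * N ≤ D * N := by
      have h2 : lam.im * N = -q.im := by linarith [hIm]
      have h3 : |lam.im * N| = |q.im| := by rw [h2, abs_neg]
      rw [abs_mul, abs_of_pos hNpos] at h3
      linarith [hqim]
    exact le_of_mul_le_mul_right h1 hNpos
  calc ‖lam‖ ≤ |lam.re| + |lam.im| := Complex.norm_le_abs_re_add_abs_im lam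
    _ = lam.re + |lam.im| := by rw [abs_of_nonneg hre]
    _ ≤ (3*M^2 + D) + D := add_le_add hre_bound him_bound
    _ ≤ 3*M^2 + 2*D + 1 := by linarith
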